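/- Let M and N be matroids of ranks r and s on the same ground set E such that every flat of N is a flat of M, and let Q be the matroid on E ⊔ R (with |R| = r − s) whose rank function is rank_Q(I ⊔ J) = min{rank_M(I) + |J|, rank_N(I) + r − s}. Then Q \ R = M and Q / R = N, i.e. N is a quotient of M. -/

import Mathlib

/-- A matroid given by its rank function on subsets of a finite ground set. -/
structure MatroidRank (α : Type) [DecidableEq α] [Fintype α] where
  r : Finset α → ℕ
  r_empty : r ∅ = 0
  r_le_insert : ∀ A x, r A ≤ r (insert x A)
  insert_le : ∀ A x, r (insert x A) ≤ r A + 1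
  r_local : ∀ A x y, r (insert x A) = r A → r (insert y A) = r A →
    r (insert x (insert y A)) = r A

variable {α : Type} [DecidableEq α] [Fintype α]

/-- `F` is a flat (closed set) of the matroid `M`. -/
def MatroidRank.IsFlat (M : MatroidRank α) (F : Finset α) : Prop :=
  ∀ x ∉ F, M.r F < M.r (insert x F)

/-- Closure of a set in the matroid `M`. -/
def MatroidRank.cl (M : MatroidRank α) (A : Finset α) : Finset α :=
  Finset.univ.filter (fun x => M.r (insert x A) = M.r A)

/-- The matroid `M` has no loops. -/
def MatroidRank.Loopfree (M : MatroidRank α) : Prop :=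
  ∀ x : α, M.r {x} = 1


/-- the part of a subset of a disjoint union lying in the first factor. -/
def leftPart {β : Type} [DecidableEq β] [Fintype β] (S : Finset (α ⊕ β)) : Finset α :=
  Finset.univ.filter (fun a => Sum.inl a ∈ S)

/-- the part of a subset of a disjoint union lying in the second factor. -/
def rightPart {β : Type} [DecidableEq β] [Fintype β] (S : Finset (α ⊕ β)) : Finset β :=
  Finset.univ.filter (fun b => Sum.inr b ∈ S)

/-! Every `N`-flat being an `M`-flat means that an element lying in the `M`-closure of a set
also lies in its `N`-closure (the `N`-closure of `A` is an `M`-flat containing `A`). Adding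
elements one at a time then gives `r_N B - r_N A ≤ r_M B - r_M A` for `A ⊆ B`; taking
`A = ∅` gives `r_N ≤ r_M`, and taking `B = E` gives `r_M A ≤ r_N A + (r - s)`. These two
inequalities decide which term of the minimum defining `rank_Q` is attained on `I ⊔ ∅` and
on `I ⊔ R`. -/

namespace MatroidRank

variable (M : MatroidRank α)

lemma r_mono {A B : Finset α} (h : A ⊆ B) : M.r A ≤ M.r B := by
  obtain ⟨C, rfl⟩ : ∃ C, B = A ∪ C := ⟨B, (Finset.union_eq_right.mpr h).symm⟩
  clear h
  induction C using Finset.induction_on with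
  | empty => simp
  | @insert z C _ ih => exact ih.trans (by rw [Finset.union_insert]; exact M.r_le_insert _ z)

lemma r_insert_union_eq {A : Finset α} {x : α} (h : M.r (insert x A) = M.r A)
    (C : Finset α) : M.r (insert x (A ∪ C)) = M.r (A ∪ C) := by
  induction C using Finset.induction_on with
  | empty => simpa
  | @insert z C _ ih =>
    rw [Finset.union_insert]
    by_cases hz : M.r (insert z (A ∪ C)) = M.r (A ∪ C)
    · rw [hz]
      exact M.r_local _ x z ih hz
    · have hz_succ : M.r (insert z (A ∪ C)) = M.r (A ∪ C) + 1 := by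
        have := M.insert_le (A ∪ C) z
        have := M.r_le_insert (A ∪ C) z
        omega
      have hle : M.r (insert x (insert z (A ∪ C))) ≤ M.r (insert x (A ∪ C)) + 1 := by
        rw [Finset.insert_comm]
        exact M.insert_le _ z
      have := M.r_le_insert (insert z (A ∪ C)) x
      omega

lemma mem_cl_iff {A : Finset α} {x : α} : x ∈ M.cl A ↔ M.r (insert x A) = M.r A := by
  simp [cl]

lemma subset_cl (A : Finset α) : A ⊆ M.cl A := fun x hx => by
  simp [mem_cl_iff, Finset.insert_eq_self.mpr hx]

lemma r_union_eq_of_subset_cl {A B : Finset α} (hB : B ⊆ M.cl A) :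
    M.r (A ∪ B) = M.r A := by
  induction B using Finset.induction_on with
  | empty => simp
  | @insert z B _ ih =>
    rw [Finset.insert_subset_iff] at hB
    rw [Finset.union_insert, M.r_insert_union_eq (M.mem_cl_iff.mp hB.1), ih hB.2]

lemma r_cl (A : Finset α) : M.r (M.cl A) = M.r A := by
  simpa [Finset.union_eq_right.mpr (M.subset_cl A)] using
    M.r_union_eq_of_subset_cl (subset_refl (M.cl A))

lemma isFlat_cl (A : Finset α) : M.IsFlat (M.cl A) := by
  intro y hy
  refine (M.r_le_insert _ y).lt_of_ne fun heq => hy (M.mem_cl_iff.mpr ?_)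
  have hle : M.r (insert y A) ≤ M.r (insert y (M.cl A)) :=
    M.r_mono (Finset.insert_subset_insert y (M.subset_cl A))
  have := M.r_le_insert A y
  rw [← heq, r_cl] at hle
  omega

variable {M} {N : MatroidRank α}

lemma r_insert_eq_of_isFlat_imp (hflats : ∀ F, N.IsFlat F → M.IsFlat F) {A : Finset α}
    {x : α} (h : M.r (insert x A) = M.r A) : N.r (insert x A) = N.r A := by
  by_contra hx
  rw [← N.mem_cl_iff] at hx
  have hM := M.r_insert_union_eq h (N.cl A)
  rw [Finset.union_eq_right.mpr (N.subset_cl A)] at hM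
  exact (hflats _ (N.isFlat_cl A) x hx).ne' hM

lemma r_add_le_of_isFlat_imp (hflats : ∀ F, N.IsFlat F → M.IsFlat F) {A B : Finset α}
    (h : A ⊆ B) : N.r B + M.r A ≤ M.r B + N.r A := by
  obtain ⟨C, rfl⟩ : ∃ C, B = A ∪ C := ⟨B, (Finset.union_eq_right.mpr h).symm⟩
  clear h
  induction C using Finset.induction_on generalizing A with
  | empty => simp [Nat.add_comm]
  | @insert z C _ ih =>
    have hstep : N.r (insert z A) + M.r A ≤ M.r (insert z A) + N.r A := by
      by_cases hz : M.r (insert z A) = M.r A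
      · rw [hz, r_insert_eq_of_isFlat_imp hflats hz, Nat.add_comm]
      · have := M.r_le_insert A z
        have := N.insert_le A z
        omega
    have := ih (A := insert z A)
    rw [Finset.insert_union] at this
    rw [Finset.union_insert]
    omega

lemma r_le_of_isFlat_imp (hflats : ∀ F, N.IsFlat F → M.IsFlat F) (A : Finset α) :
    N.r A ≤ M.r A := by
  simpa [M.r_empty, N.r_empty] using r_add_le_of_isFlat_imp hflats (Finset.empty_subset A)

end MatroidRank

section Parts

variable {γ β : Type} [DecidableEq γ] [DecidableEq β] [Fintype β] (A : Finset γ)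

@[simp]
lemma leftPart_image_inl [Fintype γ] : leftPart (β := β) (A.image Sum.inl) = A := by
  ext; simp [leftPart]

@[simp]
lemma rightPart_image_inl : rightPart (A.image (Sum.inl (α := γ) (β := β))) = ∅ := by
  ext; simp [rightPart]

@[simp]
lemma leftPart_image_inl_union_univ_inr [Fintype γ] :
    leftPart (A.image Sum.inl ∪ (Finset.univ : Finset β).image Sum.inr) = A := by
  ext; simp [leftPart]

@[simp]
lemma rightPart_image_inl_union_univ_inr :
    rightPart (A.image Sum.inl ∪ (Finset.univ : Finset β).image Sum.inr) = Finset.univ := by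
  ext; simp [rightPart]

end Parts

/-- For Q with rank function min{rank_M(I)+|J|, rank_N(I)+(r−s)} on E ⊔ R we have
Q \ R = M and Q / R = N, i.e. N is a quotient of M. -/
theorem quotient_construction_del_contr (M N : MatroidRank α)
    (hflats : ∀ F, N.IsFlat F → M.IsFlat F)
    (β : Type) [DecidableEq β] [Fintype β]
    (hcard : Fintype.card β + N.r Finset.univ = M.r Finset.univ)
    (Q : MatroidRank (α ⊕ β))
    (hQ : ∀ S : Finset (α ⊕ β),
      Q.r S = min (M.r (leftPart S) + (rightPart S).card)
        (N.r (leftPart S) + Fintype.card β)) :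
    (∀ A : Finset α, Q.r (A.image Sum.inl) = M.r A) ∧
    (∀ A : Finset α,
      Q.r (A.image Sum.inl ∪ (Finset.univ : Finset β).image Sum.inr)
        = N.r A + Q.r ((Finset.univ : Finset β).image Sum.inr)) := by
  have hM_le : ∀ A, M.r A ≤ N.r A + Fintype.card β := fun A => by
    have := MatroidRank.r_add_le_of_isFlat_imp hflats (Finset.subset_univ A)
    omega
  have hQ_R : Q.r ((Finset.univ : Finset β).image Sum.inr) = Fintype.card β := by
    have := hQ ((∅ : Finset α).image Sum.inl ∪ (Finset.univ : Finset β).image Sum.inr)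
    rw [leftPart_image_inl_union_univ_inr, rightPart_image_inl_union_univ_inr] at this
    simpa [M.r_empty, N.r_empty] using this
  refine ⟨fun A => ?_, fun A => ?_⟩
  · simpa [hQ] using hM_le A
  · rw [hQ, hQ_R]
    simpa using MatroidRank.r_le_of_isFlat_imp hflats A
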